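/- Let a be an even positive integer and b an odd positive integer, let λ = (1+a, 1^b) be the hook partition with arm length a and leg length b, and define α = (1 + a/2, 1^{(b−1)/2}) and β = (a/2, 1^{(b+1)/2}). Then the Littlewood–Richardson coefficient c^λ_{βα} (counting Littlewood–Richardson tableaux of shape λ/β and content α) is at least 1. -/

import Mathlib

/-!
The skew shape `λ/β` consists of the cells `a/2, …, a` of the first row together with the
bottom `(b - 1)/2` cells of the first column. Filling the row with `1`s and the column, top to
bottom, with `2, 3, …, (b + 1)/2` gives a Littlewood–Richardson tableau of content `α`. Since
the Littlewood–Richardson tableaux of a given shape and content form a finite set, the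
coefficient is at least one.
-/

/-- A partition: a weakly decreasing finite sequence (list) of positive
integers. -/
def IsPartition (l : List ℕ) : Prop :=
  l.Pairwise (· ≥ ·) ∧ ∀ x ∈ l, 0 < x

/-- The `i`-th part (0-indexed) of a partition, `0` beyond its length. -/
def part (l : List ℕ) (i : ℕ) : ℕ := l.getD i 0

/-- Cell `(i, j)` (row `i`, column `j`, both 0-indexed) lies in the skew
Young diagram `ν/λ`. -/
def InSkew (nu lam : List ℕ) (i j : ℕ) : Prop :=
  part lam i ≤ j ∧ j < part nu i

/-- Cell `(i, j)` comes weakly before cell `(r, c)` in the reverse reading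
order: rows are read top to bottom, and each row is read right to left. -/
def ReadingLE (i j r c : ℕ) : Prop := i < r ∨ (i = r ∧ c ≤ j)

/-- `T` is a Littlewood–Richardson tableau of shape `ν/λ` and content `μ`:
`λ ⊆ ν`, the entries of `T` are positive exactly on the cells of the skew
diagram `ν/λ`, entries weakly increase from left to right along rows,
entries strictly increase from top to bottom down columns, for every `j ≥ 1`
the entry `j` occurs exactly `μ_j` times, and the reverse reading word is a
lattice word: every prefix contains at least as many occurrences of `j` as
of `j + 1`, for every `j ≥ 1`. -/
structure IsLRTableau (nu lam mu : List ℕ) (T : ℕ → ℕ → ℕ) : Prop where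
  subset : ∀ i, part lam i ≤ part nu i
  support : ∀ i j, 0 < T i j ↔ InSkew nu lam i j
  row_weak : ∀ i j j', InSkew nu lam i j → InSkew nu lam i j' → j ≤ j' →
    T i j ≤ T i j'
  col_strict : ∀ i i' j, InSkew nu lam i j → InSkew nu lam i' j → i < i' →
    T i j < T i' j
  content : ∀ k : ℕ, {p : ℕ × ℕ | T p.1 p.2 = k + 1}.ncard = part mu k
  lattice : ∀ r c k : ℕ,
    {p : ℕ × ℕ | T p.1 p.2 = k + 2 ∧ ReadingLE p.1 p.2 r c}.ncard ≤
    {p : ℕ × ℕ | T p.1 p.2 = k + 1 ∧ ReadingLE p.1 p.2 r c}.ncard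

/-- The Littlewood–Richardson coefficient `c^ν_{λμ}`: the number of
Littlewood–Richardson tableaux of shape `ν/λ` and content `μ`. -/
noncomputable def lrCoeff (nu lam mu : List ℕ) : ℕ :=
  {T : ℕ → ℕ → ℕ | IsLRTableau nu lam mu T}.ncard

/-- The Newell–Littlewood coefficient
`N^ν_{λμ} = Σ_{α,β,γ} c^λ_{αβ} · c^μ_{αγ} · c^ν_{βγ}`, the sum running over
all triples of partitions `(α, β, γ)` (only finitely many terms are
nonzero). -/
noncomputable def nlCoeff (lam mu nu : List ℕ) : ℕ :=
  ∑ᶠ x : {l : List ℕ // IsPartition l} × {l : List ℕ // IsPartition l} ×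
      {l : List ℕ // IsPartition l},
    lrCoeff lam x.1.val x.2.1.val * lrCoeff mu x.1.val x.2.2.val *
      lrCoeff nu x.2.1.val x.2.2.val

/-- The hook partition `(1 + a, 1^b)` with arm length `a` and leg length
`b`. -/
def hook (a b : ℕ) : List ℕ := (1 + a) :: List.replicate b 1

theorem part_le_sum (l : List ℕ) (i : ℕ) : part l i ≤ l.sum := by
  unfold part
  by_cases hi : i < l.length
  · rw [List.getD_eq_getElem _ _ hi]
    exact List.le_sum_of_mem (List.getElem_mem hi)
  · rw [List.getD_eq_default _ _ (not_lt.mp hi)]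
    exact Nat.zero_le _

theorem lt_length_of_part_pos {l : List ℕ} {i : ℕ} (h : 0 < part l i) : i < l.length := by
  by_contra hi
  rw [part, List.getD_eq_default _ _ (not_lt.mp hi)] at h
  exact h.false

theorem part_cons_replicate (x c n i : ℕ) :
    part (x :: List.replicate n c) i = if i = 0 then x else if i ≤ n then c else 0 := by
  cases i with
  | zero => rfl
  | succ i =>
    show (List.replicate n c).getD i 0 = _
    by_cases h : i < n
    · rw [List.getD_eq_getElem _ _ (by simpa using h), List.getElem_replicate,
        if_neg i.succ_ne_zero, if_pos (by omega)]
    · rw [List.getD_eq_default _ _ (by simpa using h), if_neg i.succ_ne_zero, if_neg (by omega)]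

namespace IsLRTableau

variable {nu lam mu : List ℕ} {T : ℕ → ℕ → ℕ}

theorem lt_of_pos (hT : IsLRTableau nu lam mu T) {i j : ℕ} (h : 0 < T i j) :
    i < nu.length ∧ j < nu.sum := by
  have hij := ((hT.support i j).mp h).2
  exact ⟨lt_length_of_part_pos (j.zero_le.trans_lt hij), hij.trans_le (part_le_sum nu i)⟩

theorem finite_setOf_pos (hT : IsLRTableau nu lam mu T) :
    {p : ℕ × ℕ | 0 < T p.1 p.2}.Finite :=
  ((Set.finite_Iio nu.length).prod (Set.finite_Iio nu.sum)).subset fun _ hp ↦ hT.lt_of_pos hp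

theorem le_length (hT : IsLRTableau nu lam mu T) (i j : ℕ) : T i j ≤ mu.length := by
  by_contra! h
  obtain ⟨k, hk, hTk⟩ : ∃ k, mu.length ≤ k ∧ T i j = k + 1 := ⟨T i j - 1, by omega, by omega⟩
  have hfin : {p : ℕ × ℕ | T p.1 p.2 = k + 1}.Finite :=
    hT.finite_setOf_pos.subset fun p (hp : T p.1 p.2 = k + 1) ↦ by simp [hp]
  have hempty : {p : ℕ × ℕ | T p.1 p.2 = k + 1}.ncard = 0 := by
    rw [hT.content, part, List.getD_eq_default _ _ hk]
  exact Set.eq_empty_iff_forall_notMem.mp ((Set.ncard_eq_zero hfin).mp hempty) (i, j) hTk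

end IsLRTableau

theorem finite_setOf_isLRTableau (nu lam mu : List ℕ) :
    {T | IsLRTableau nu lam mu T}.Finite := by
  refine Set.Finite.of_finite_image (f := fun T (p : Fin nu.length × Fin nu.sum) ↦
    Fin.ofNat (mu.length + 1) (T p.1 p.2)) (Set.toFinite _) fun T hT T' hT' h ↦ ?_
  funext i j
  by_cases hpos : 0 < T i j ∨ 0 < T' i j
  · obtain ⟨hi, hj⟩ := hpos.elim hT.lt_of_pos hT'.lt_of_pos
    have hval := congrArg Fin.val (congrFun h (⟨i, hi⟩, ⟨j, hj⟩))
    simpa [Fin.val_ofNat, Nat.mod_eq_of_lt (Nat.lt_succ_of_le (hT.le_length i j)),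
      Nat.mod_eq_of_lt (Nat.lt_succ_of_le (hT'.le_length i j))] using hval
  · omega

theorem one_le_lrCoeff_of_isLRTableau {nu lam mu : List ℕ} {T : ℕ → ℕ → ℕ}
    (hT : IsLRTableau nu lam mu T) : 1 ≤ lrCoeff nu lam mu :=
  (Set.ncard_pos (finite_setOf_isLRTableau nu lam mu)).mpr ⟨T, hT⟩

-- The filling of the header, for `a = 2 * m` and `b = 2 * t + 1`.
def hookTableau (m t i j : ℕ) : ℕ :=
  if i = 0 ∧ m ≤ j ∧ j ≤ 2 * m then 1
  else if t + 1 < i ∧ i ≤ 2 * t + 1 ∧ j = 0 then i - t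
  else 0

section HookTableau

variable (m t : ℕ)

theorem inSkew_hook_iff (i j : ℕ) :
    InSkew (hook (2 * m) (2 * t + 1)) (m :: List.replicate (t + 1) 1) i j ↔
      (i = 0 ∧ m ≤ j ∧ j ≤ 2 * m) ∨ (t + 1 < i ∧ i ≤ 2 * t + 1 ∧ j = 0) := by
  rw [InSkew, hook, part_cons_replicate, part_cons_replicate]
  split_ifs <;> omega

theorem hookTableau_eq_succ_iff (i j k : ℕ) :
    hookTableau m t i j = k + 1 ↔
      (k = 0 ∧ i = 0 ∧ m ≤ j ∧ j ≤ 2 * m) ∨ (1 ≤ k ∧ k ≤ t ∧ i = t + 1 + k ∧ j = 0) := by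
  unfold hookTableau
  split <;> [omega; split <;> omega]

theorem setOf_hookTableau_eq_succ (k : ℕ) :
    {p : ℕ × ℕ | hookTableau m t p.1 p.2 = k + 1} =
      if k = 0 then Prod.mk 0 '' Set.Icc m (2 * m)
      else if k ≤ t then {(t + 1 + k, 0)} else ∅ := by
  ext ⟨i, j⟩
  simp only [Set.mem_ofPred_eq, hookTableau_eq_succ_iff]
  split_ifs with hk hkt
  · simp only [Set.mem_image, Set.mem_Icc, Prod.mk.injEq]
    constructor
    · rintro (⟨-, rfl, hj⟩ | ⟨hk', -⟩)
      · exact ⟨j, hj, rfl, rfl⟩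
      · omega
    · rintro ⟨j, hj, rfl, rfl⟩
      exact Or.inl ⟨hk, rfl, hj⟩
  · simp only [Set.mem_singleton_iff, Prod.mk.injEq]
    omega
  · simp only [Set.mem_empty_iff_false, iff_false]
    omega

theorem finite_setOf_hookTableau_eq_succ (k : ℕ) :
    {p : ℕ × ℕ | hookTableau m t p.1 p.2 = k + 1}.Finite := by
  rw [setOf_hookTableau_eq_succ]
  split_ifs
  · exact (Set.finite_Icc _ _).image _
  · exact Set.finite_singleton _
  · exact Set.finite_empty

theorem lattice_hookTableau (r c k : ℕ) :
    {p : ℕ × ℕ | hookTableau m t p.1 p.2 = k + 2 ∧ ReadingLE p.1 p.2 r c}.ncard ≤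
      {p : ℕ × ℕ | hookTableau m t p.1 p.2 = k + 1 ∧ ReadingLE p.1 p.2 r c}.ncard := by
  set A := {p : ℕ × ℕ | hookTableau m t p.1 p.2 = k + 2 ∧ ReadingLE p.1 p.2 r c}
  set B := {p : ℕ × ℕ | hookTableau m t p.1 p.2 = k + 1 ∧ ReadingLE p.1 p.2 r c}
  obtain hA | ⟨⟨i, j⟩, hij, hR⟩ := A.eq_empty_or_nonempty
  · simp [hA]
  rw [hookTableau_eq_succ_iff] at hij
  have hA_sub : A ⊆ {(t + 2 + k, 0)} := fun ⟨i', j'⟩ ⟨hv, _⟩ ↦ by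
    rw [hookTableau_eq_succ_iff] at hv
    simp only [Set.mem_singleton_iff, Prod.mk.injEq]
    omega
  -- the only entry `k + 2` is read after some entry `k + 1`
  have hB : B.Nonempty := by
    obtain rfl | hk := k.eq_zero_or_pos
    · exact ⟨(0, 2 * m), (hookTableau_eq_succ_iff ..).mpr (by omega), by
        unfold ReadingLE at hR ⊢; omega⟩
    · exact ⟨(t + 1 + k, 0), (hookTableau_eq_succ_iff ..).mpr (by omega), by
        unfold ReadingLE at hR ⊢; omega⟩
  calc A.ncard ≤ ({(t + 2 + k, 0)} : Set (ℕ × ℕ)).ncard := Set.ncard_le_ncard hA_sub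
    _ = 1 := Set.ncard_singleton _
    _ ≤ B.ncard := (Set.ncard_pos ((finite_setOf_hookTableau_eq_succ m t k).subset
        fun _ hp ↦ hp.1)).mpr hB

theorem isLRTableau_hookTableau :
    IsLRTableau (hook (2 * m) (2 * t + 1)) (m :: List.replicate (t + 1) 1) (hook m t)
      (hookTableau m t) where
  subset i := by
    rw [hook, part_cons_replicate, part_cons_replicate]
    split_ifs <;> omega
  support i j := by
    rw [inSkew_hook_iff, hookTableau]
    split <;> [omega; split <;> omega]
  row_weak i j j' hj hj' hjj' := by
    rw [inSkew_hook_iff] at hj hj'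
    unfold hookTableau
    split_ifs <;> omega
  col_strict i i' j hi hi' hii' := by
    rw [inSkew_hook_iff] at hi hi'
    unfold hookTableau
    split_ifs <;> omega
  content k := by
    rw [setOf_hookTableau_eq_succ, hook, part_cons_replicate]
    split_ifs
    · rw [Set.ncard_image_of_injective _ (Prod.mk_right_injective 0), ← Finset.coe_Icc,
        Set.ncard_coe_finset, Nat.card_Icc]
      omega
    · exact Set.ncard_singleton _
    · exact Set.ncard_empty _
  lattice := lattice_hookTableau m t

end HookTableau

theorem one_le_lrCoeff_hook_even_arm_beta_alpha_general (a b : ℕ)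
    (ha : Even a) (hb : Odd b) :
    1 ≤ lrCoeff (hook a b) (a / 2 :: List.replicate ((b + 1) / 2) 1)
        (hook (a / 2) ((b - 1) / 2)) := by
  obtain ⟨m, rfl⟩ := ha
  obtain ⟨t, rfl⟩ := hb
  have hm : (m + m) / 2 = m := by omega
  have ht_succ : (2 * t + 1 + 1) / 2 = t + 1 := by omega
  have ht : (2 * t + 1 - 1) / 2 = t := by omega
  rw [hm, ht_succ, ht, ← two_mul]
  exact one_le_lrCoeff_of_isLRTableau (isLRTableau_hookTableau m t)

/-- For the hook `λ = (1+a, 1^b)` with `a` even positive and `b` odd, with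
`α = (1 + a/2, 1^{(b−1)/2})` and `β = (a/2, 1^{(b+1)/2})`, one has
`c^λ_{βα} ≥ 1` (tableaux of shape `λ/β` and content `α`). -/
theorem one_le_lrCoeff_hook_even_arm_beta_alpha (a b : ℕ)
    (ha : Even a) (ha' : 0 < a) (hb : Odd b) :
    1 ≤ lrCoeff (hook a b) (a / 2 :: List.replicate ((b + 1) / 2) 1)
        (hook (a / 2) ((b - 1) / 2)) :=
  one_le_lrCoeff_hook_even_arm_beta_alpha_general a b ha hb
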